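/- Let C be a linear code of length n over a finite commutative Frobenius ring R, and let χ : (R, +) → ℂ^× be a generating character of R. Let S = (s_{ij}) be the (t+1)×(t+1) complex matrix with rows and columns indexed by {0, 1, …, t}, where s_{ij} = Σ_{r ∈ R, rR = a_jR} χ(r a_i). Then swe_{C⊥}(x) = (1/|C|) · swe_C(Sx), as an identity of polynomials in x_0, …, x_t. -/

import Mathlib

noncomputable section
open scoped BigOperators

/-- The dual of a linear code `C ⊆ Rⁿ` with respect to the standard inner
product `u·v = ∑ ℓ, u ℓ * v ℓ`. -/
def dualCode {R : Type*} [CommRing R] {n : ℕ} (C : Submodule R (Fin n → R)) :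
    Submodule R (Fin n → R) where
  carrier := {v | ∀ u ∈ C, ∑ ℓ, u ℓ * v ℓ = 0}
  add_mem' := by
    intro v w hv hw u hu
    simp only [Set.mem_setOf_eq] at *
    have h1 := hv u hu
    have h2 := hw u hu
    simp only [Pi.add_apply, mul_add, Finset.sum_add_distrib, h1, h2, add_zero]
  zero_mem' := by
    intro u hu
    simp
  smul_mem' := by
    intro c v hv u hu
    simp only [Set.mem_setOf_eq] at *
    have h := hv u hu
    have : ∑ ℓ, u ℓ * (c • v) ℓ = c * ∑ ℓ, u ℓ * v ℓ := by
      rw [Finset.mul_sum]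
      exact Finset.sum_congr rfl fun ℓ _ => by
        simp only [Pi.smul_apply, smul_eq_mul]; ring
    rw [this, h, mul_zero]

/-- A finite commutative ring is Frobenius iff `|C|·|C⊥| = |R|ⁿ` for every
linear code `C` of every length `n` over `R`. -/
def IsFrobeniusRing (R : Type*) [CommRing R] [Fintype R] : Prop :=
  ∀ (n : ℕ) (C : Submodule R (Fin n → R)),
    Nat.card C * Nat.card (dualCode C) = Fintype.card R ^ n

open MvPolynomial Classical

/-- The symmetrized weight composition `swc_i(c) = |{ℓ : c_ℓ R = a_i R}|`. -/
def swc {R : Type*} [CommRing R] {t n : ℕ} (a : Fin (t + 1) → R)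
    (c : Fin n → R) (i : Fin (t + 1)) : ℕ :=
  Nat.card {ℓ : Fin n // Ideal.span {c ℓ} = Ideal.span {a i}}

/-- The symmetrized weight enumerator
`swe_C(x₀, …, x_t) = ∑_{c ∈ C} ∏ᵢ xᵢ^(swcᵢ(c))`, with complex coefficients. -/
def swe {R : Type*} [CommRing R] [Fintype R] {t n : ℕ} (a : Fin (t + 1) → R)
    (C : Submodule R (Fin n → R)) : MvPolynomial (Fin (t + 1)) ℂ :=
  haveI : Fintype C := Fintype.ofFinite C
  ∑ c : C, ∏ i, X i ^ swc a (c : Fin n → R) i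

/-!
Substituting `x ↦ S x` into the monomial `∏ ℓ x_{[c ℓ]}` of a codeword `c` and expanding the
product gives `∑ v, χ (c ⬝ᵥ v) ∏ ℓ x_{[v ℓ]}`, where `[r]` is the index of the principal ideal
`rR`; here one uses that `s_{ij}` depends on `a_i` only through `a_i R`, because two generators of
the same principal ideal of a finite ring differ by a unit. Summing over `c ∈ C`, the character sum
`∑_{c ∈ C} χ (c ⬝ᵥ v)` is `|C|` for `v ∈ C⊥` and `0` otherwise, since `χ` is generating.
-/

theorem exists_isIdempotentElem_pow {M : Type*} [Monoid M] [Finite M] (x : M) :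
    ∃ m : ℕ, IsIdempotentElem (x ^ (m + 1)) := by
  obtain ⟨i, j, hne, hij⟩ := Finite.exists_ne_map_eq_of_infinite (fun k : ℕ => x ^ k)
  wlog hlt : i < j generalizing i j
  · exact this j i hne.symm hij.symm (by omega)
  obtain ⟨p, rfl⟩ : ∃ p, j = i + (p + 1) := ⟨j - i - 1, by omega⟩
  have periodic : ∀ k d, x ^ (i + k + d * (p + 1)) = x ^ (i + k) := by
    intro k d
    induction d with
    | zero => simp
    | succ d ih =>
      rw [show i + k + (d + 1) * (p + 1) = i + (p + 1) + (k + d * (p + 1)) by ring, pow_add,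
        ← hij, ← pow_add, ← add_assoc, ih]
  refine ⟨i * (p + 1) + p, ?_⟩
  rw [IsIdempotentElem, ← pow_add]
  convert periodic (i * p + p + 1) (i + 1) using 2 <;> ring

theorem associated_of_span_singleton_eq {R : Type*} [CommRing R] [Finite R] {a c : R}
    (h : Ideal.span {a} = Ideal.span {c}) : Associated a c := by
  obtain ⟨s, hs⟩ : a ∣ c := Ideal.span_singleton_le_span_singleton.mp h.ge
  obtain ⟨s', hs'⟩ : c ∣ a := Ideal.span_singleton_le_span_singleton.mp h.le
  obtain ⟨m, he⟩ := exists_isIdempotentElem_pow (s * s')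
  have hae : ∀ k : ℕ, a * (s * s') ^ k = a := by
    intro k
    induction k with
    | zero => simp
    | succ k ih => rw [pow_succ, ← mul_assoc, ih, ← mul_assoc, ← hs, ← hs']
  set e := (s * s') ^ (m + 1)
  -- With `x = s * s'` we have `a * x = a`; the unit acts as `s` on `eR` (inverse `s' * x ^ m`)
  -- and as `1` on `(1 - e)R`, while `a = a * e`.
  have hunit : (s * e + (1 - e)) * (s' * (s * s') ^ m * e + (1 - e)) = 1 := by
    rw [IsIdempotentElem] at he
    linear_combination (e + 2 - s - s' * (s * s') ^ m) * he
  refine ⟨Units.mkOfMulEqOne _ _ hunit, ?_⟩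
  rw [Units.val_mkOfMulEqOne]
  linear_combination (s - 1) * hae (m + 1) + hs.symm

theorem AddChar.map_sum_eq_prod {A M ι : Type*} [AddCommMonoid A] [CommMonoid M]
    (χ : AddChar A M) (s : Finset ι) (g : ι → A) :
    χ (∑ i ∈ s, g i) = ∏ i ∈ s, χ (g i) := by
  classical
  induction s using Finset.induction_on with
  | empty => simp
  | insert i s hi ih => rw [Finset.sum_insert hi, Finset.prod_insert hi, map_add_eq_mul, ih]

section CharacterSums

variable {R : Type*} [CommRing R]

theorem sum_ite_span_eq_mul_of_associated [Fintype R] {M : Type*} [AddCommMonoid M] (f : R → M)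
    {a c : R} (h : Associated a c) (b : R) :
    (∑ r : R, if Ideal.span {r} = Ideal.span {b} then f (r * c) else 0) =
      ∑ r : R, if Ideal.span {r} = Ideal.span {b} then f (r * a) else 0 := by
  obtain ⟨u, rfl⟩ := h
  refine Fintype.sum_equiv (Units.mulRight u) _ _ fun r => ?_
  rw [Units.mulRight_apply, Ideal.span_singleton_mul_right_unit u.isUnit, mul_right_comm,
    mul_assoc]

theorem sum_addChar_dotProduct {K : Type*} [CommRing K] [IsDomain K] (χ : AddChar R K)
    (hχ : ∀ I : Ideal R, (∀ x ∈ I, χ x = 1) → I = ⊥) {n : ℕ} (C : Submodule R (Fin n → R))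
    [Fintype C] (v : Fin n → R) :
    ∑ u : C, χ ((u : Fin n → R) ⬝ᵥ v) = if v ∈ dualCode C then (Fintype.card C : K) else 0 := by
  let dot : (Fin n → R) →ₗ[R] R := (dotProductBilin R R).flip v
  let ψ : AddChar C K := χ.compAddMonoidHom (dot.comp C.subtype).toAddMonoidHom
  have hψ : ψ = 0 ↔ v ∈ dualCode C := by
    refine ⟨fun h u hu => ?_, fun h => AddChar.eq_zero_iff.mpr fun u => ?_⟩
    · have hI : C.map dot = ⊥ := hχ _ fun _ ⟨w, hw, hwx⟩ => hwx ▸ DFunLike.congr_fun h ⟨w, hw⟩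
      simpa [dot, dotProduct] using (Submodule.eq_bot_iff _).mp hI (dot u) ⟨u, hu, rfl⟩
    · simpa [ψ, dot, dotProduct] using congrArg χ (h u u.2)
  exact (AddChar.sum_eq_ite ψ).trans (by simp only [hψ])

theorem sum_prod_addChar_smul_eq_card_smul_sum_dualCode [Fintype R] {K A : Type*} [CommRing K]
    [IsDomain K] [CommRing A] [Algebra K A] (χ : AddChar R K)
    (hχ : ∀ I : Ideal R, (∀ x ∈ I, χ x = 1) → I = ⊥) {n : ℕ} (C : Submodule R (Fin n → R))
    [Fintype C] [Fintype (dualCode C)] (w : R → A) :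
    ∑ c : C, ∏ ℓ, ∑ s : R, χ (s * (c : Fin n → R) ℓ) • w s =
      (Fintype.card C : K) • ∑ v : dualCode C, ∏ ℓ, w ((v : Fin n → R) ℓ) := by
  calc ∑ c : C, ∏ ℓ, ∑ s : R, χ (s * (c : Fin n → R) ℓ) • w s
      = ∑ c : C, ∑ v : Fin n → R, χ ((c : Fin n → R) ⬝ᵥ v) • ∏ ℓ, w (v ℓ) := by
        refine Finset.sum_congr rfl fun c _ => ?_
        rw [Fintype.prod_sum]
        refine Finset.sum_congr rfl fun v _ => ?_
        simp only [Finset.prod_smul, dotProduct, AddChar.map_sum_eq_prod, mul_comm]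
    _ = ∑ v : Fin n → R, (∑ c : C, χ ((c : Fin n → R) ⬝ᵥ v)) • ∏ ℓ, w (v ℓ) := by
        rw [Finset.sum_comm]
        simp only [Finset.sum_smul]
    _ = ∑ v : Fin n → R, if v ∈ dualCode C then (Fintype.card C : K) • ∏ ℓ, w (v ℓ) else 0 := by
        simp only [sum_addChar_dotProduct χ hχ, ite_smul, zero_smul]
    _ = (Fintype.card C : K) • ∑ v : dualCode C, ∏ ℓ, w ((v : Fin n → R) ℓ) := by
        rw [Finset.smul_sum, ← Finset.sum_filter]
        exact Finset.sum_subtype _ (fun v => by simp) _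

end CharacterSums

theorem exists_forall_span_singleton_eq_iff {R κ : Type*} [CommRing R] {a : κ → R}
    (hrep : ∀ r : R, ∃ i, Ideal.span {r} = Ideal.span {a i})
    (hinj : ∀ i j, Ideal.span {a i} = Ideal.span {a j} → i = j) :
    ∃ ι : R → κ, ∀ r i, Ideal.span {r} = Ideal.span {a i} ↔ ι r = i := by
  choose ι hι using hrep
  exact ⟨ι, fun r i => ⟨fun h => hinj _ _ ((hι r).symm.trans h), fun h => h ▸ hι r⟩⟩

section SymmetrizedWeightEnumerator

variable {R : Type*} [CommRing R] {t : ℕ} {a : Fin (t + 1) → R} {ι : R → Fin (t + 1)}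

theorem prod_pow_swc {M : Type*} [CommMonoid M]
    (hι : ∀ r i, Ideal.span {r} = Ideal.span {a i} ↔ ι r = i) {n : ℕ} (c : Fin n → R)
    (g : Fin (t + 1) → M) :
    ∏ i, g i ^ swc a c i = ∏ ℓ, g (ι (c ℓ)) := by
  rw [← Finset.prod_fiberwise' Finset.univ (fun ℓ => ι (c ℓ)) g]
  refine Finset.prod_congr rfl fun i _ => ?_
  simp [swc, hι, Nat.card_eq_fintype_card, Fintype.card_subtype, Finset.prod_const]

theorem swe_eq_sum_prod [Fintype R] (hι : ∀ r i, Ideal.span {r} = Ideal.span {a i} ↔ ι r = i)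
    {n : ℕ} (C : Submodule R (Fin n → R)) [Fintype C] :
    swe a C = ∑ c : C, ∏ ℓ, X (ι ((c : Fin n → R) ℓ)) := by
  simp only [swe, prod_pow_swc hι]
  congr!

theorem bind₁_X_eq_sum_addChar_smul [Fintype R] {K : Type*} [CommSemiring K]
    (hι : ∀ r i, Ideal.span {r} = Ideal.span {a i} ↔ ι r = i) (χ : AddChar R K)
    (S : Matrix (Fin (t + 1)) (Fin (t + 1)) K)
    (hS : ∀ i j, S i j = ∑ r : R,
      if Ideal.span {r} = Ideal.span {a j} then χ (r * a i) else 0) (r : R) :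
    bind₁ (fun i => ∑ j, C (S i j) * X j) (X (ι r)) = ∑ s : R, χ (s * r) • X (ι s) := by
  have hSr : ∀ j, S (ι r) j = ∑ s : R, if ι s = j then χ (s * r) else 0 := by
    intro j
    rw [hS, sum_ite_span_eq_mul_of_associated _
      (associated_of_span_singleton_eq ((hι r (ι r)).mpr rfl))]
    simp only [hι]
  simp only [bind₁_X_right, hSr, map_sum, Finset.sum_mul]
  rw [Finset.sum_comm]
  refine Finset.sum_congr rfl fun s _ => ?_
  simp [MvPolynomial.smul_eq_C_mul, apply_ite C]

end SymmetrizedWeightEnumerator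

theorem stmt4_general {R : Type*} [CommRing R] [Fintype R]
    {t : ℕ} (a : Fin (t + 1) → R)
    (hrep : ∀ r : R, ∃ i, Ideal.span {r} = Ideal.span {a i})
    (hinj : ∀ i j, Ideal.span {a i} = Ideal.span {a j} → i = j)
    (χ : AddChar R ℂ)
    (hχ : ∀ I : Ideal R, (∀ x ∈ I, χ x = 1) → I = ⊥)
    {n : ℕ} (C : Submodule R (Fin n → R))
    (S : Matrix (Fin (t + 1)) (Fin (t + 1)) ℂ)
    (hS : ∀ i j, S i j = ∑ r : R,
      if Ideal.span {r} = Ideal.span {a j} then χ (r * a i) else 0) :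
    swe a (dualCode C) =
      MvPolynomial.C ((Nat.card C : ℂ)⁻¹) *
        (MvPolynomial.bind₁ (fun i : Fin (t + 1) =>
          ∑ j : Fin (t + 1), MvPolynomial.C (S i j) * X j)) (swe a C) := by
  obtain ⟨ι, hι⟩ := exists_forall_span_singleton_eq_iff hrep hinj
  have := Fintype.ofFinite C
  have := Fintype.ofFinite (dualCode C)
  have transform : bind₁ (fun i => ∑ j, MvPolynomial.C (S i j) * X j) (swe a C) =
      (Fintype.card C : ℂ) • swe a (dualCode C) := by
    simp only [swe_eq_sum_prod hι, map_sum, map_prod, bind₁_X_eq_sum_addChar_smul hι χ S hS]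
    exact sum_prod_addChar_smul_eq_card_smul_sum_dualCode χ hχ C _
  rw [transform, C_mul', smul_smul, Nat.card_eq_fintype_card,
    inv_mul_cancel₀ (Nat.cast_ne_zero.mpr Fintype.card_ne_zero), one_smul]

/-- Wood's MacWilliams identity for the symmetrized weight
enumerator, `swe_{C⊥}(x) = (1/|C|) · swe_C(Sx)`, where
`s_{ij} = ∑_{r R = a_j R} χ(r a_i)` for a generating character `χ` of `R`. -/
theorem stmt4 {R : Type*} [CommRing R] [Fintype R] (hR : IsFrobeniusRing R)
    {t : ℕ} (a : Fin (t + 1) → R)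
    (hrep : ∀ r : R, ∃ i, Ideal.span {r} = Ideal.span {a i})
    (hinj : ∀ i j, Ideal.span {a i} = Ideal.span {a j} → i = j)
    (χ : AddChar R ℂ)
    (hχ : ∀ I : Ideal R, (∀ x ∈ I, χ x = 1) → I = ⊥)
    {n : ℕ} (C : Submodule R (Fin n → R))
    (S : Matrix (Fin (t + 1)) (Fin (t + 1)) ℂ)
    (hS : ∀ i j, S i j = ∑ r : R,
      if Ideal.span {r} = Ideal.span {a j} then χ (r * a i) else 0) :
    swe a (dualCode C) =
      MvPolynomial.C ((Nat.card C : ℂ)⁻¹) *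
        (MvPolynomial.bind₁ (fun i : Fin (t + 1) =>
          ∑ j : Fin (t + 1), MvPolynomial.C (S i j) * X j)) (swe a C) :=
  stmt4_general a hrep hinj χ hχ C S hS

end
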